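/- Lemma 3, almost-sure consistency at the true causal parameter: assume the effect model at the true parameter, i.e. Y i true = h i (Y i false) for every unit i, and Assumption 3 (fixed missingness indicators M : I → Bool). Define the transformed outcomes W z i := (if arm z i then Y i (arm z i) else h i (Y i (arm z i))) and transformed realized outcomes Wstar z i := (if M i then none else some (W z i)). Let G : Ω → (I → Option ℝ) → (I → ℝ) be a deterministic imputation algorithm, H : (I → ℝ) → (I → ℝ) a deterministic covariate-adjustment model, res z ystar := fun i => G z ystar i - H (G z ystar) i, T : Ω → (I → ℝ) → ℝ a test statistic, z₀ ∈ Ω the observed assignment, t_β := T z₀ (res z₀ (Wstar z₀)), and p_β := (𝒫.toMeasure {z | T z (res z (Wstar z)) ≥ t_β}).toReal. For L ≥ 1 define p̂ L := (1/L) * ∑_{l=0}^{L-1} indicator {ω | T (Z l ω) (res (Z l ω) (Wstar z₀)) ≥ t_β}. Then p̂ L converges to p_β μ-almost surely as L → ∞. -/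

import Mathlib

/-!
At the true parameter the transformation undoes the effect model, so every transformed outcome
equals the treated potential outcome whatever the assignment; hence `Wstar` does not depend on the
assignment, and `pβ` is the `P`-probability of the fixed set `{z | T z (res z (Wstar z₀)) ≥ tβ}`.
The Monte Carlo estimate `p̂ L` is the empirical frequency of that set among `L` i.i.d. draws from
`P`, so it converges almost surely by the strong law of large numbers.
-/

open MeasureTheory ProbabilityTheory Filter Topology

theorem strong_law_ae_indicator {α Ω : Type*} [MeasurableSpace α]
    [MeasurableSpace Ω] {μ : Measure Ω} {ν : Measure α} [IsFiniteMeasure ν] {Z : ℕ → Ω → α}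
    (hZ : ∀ l, Measurable (Z l)) (hlaw : ∀ l, μ.map (Z l) = ν)
    (hindep : Pairwise fun i j => IndepFun (Z i) (Z j) μ) {S : Set α} (hS : MeasurableSet S) :
    ∀ᵐ ω ∂μ, Tendsto (fun L : ℕ => (∑ l ∈ Finset.range L, S.indicator (1 : α → ℝ) (Z l ω)) / L)
      atTop (𝓝 (ν.real S)) := by
  set f : α → ℝ := S.indicator 1
  have hf : Measurable f := measurable_one.indicator hS
  have hident : ∀ l, IdentDistrib (f ∘ Z l) (f ∘ Z 0) μ μ := fun l =>
    IdentDistrib.comp ⟨(hZ l).aemeasurable, (hZ 0).aemeasurable, (hlaw l).trans (hlaw 0).symm⟩ hf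
  have hint : Integrable (f ∘ Z 0) μ := by
    rw [← integrable_map_measure hf.aestronglyMeasurable (hZ 0).aemeasurable, hlaw 0]
    exact (integrable_const 1).indicator hS
  have hmean : μ[f ∘ Z 0] = ν.real S := by
    rw [Function.comp_def, ← integral_map (hZ 0).aemeasurable hf.aestronglyMeasurable, hlaw 0,
      integral_indicator_one hS]
  have hslln := strong_law_ae_real (fun l => f ∘ Z l) hint
    (fun i j hij => (hindep hij).comp hf hf) hident
  rwa [hmean] at hslln

theorem adjusted_outcome_eq_treated {β : Type*} {y : Bool → β} {g : β → β}
    (hy : y true = g (y false)) (b : Bool) : (if b then y b else g (y b)) = y true := by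
  cases b <;> simp [hy]

theorem lemma3_as_consistency_true_parameter_general
    {Ω : Type*} [Fintype Ω] [MeasurableSpace Ω] [MeasurableSingletonClass Ω]
    {I : Type*}
    {Ω' : Type*} [MeasurableSpace Ω'] (μ : Measure Ω')
    (P : PMF Ω)                   -- randomization distribution (Assumption 1)
    (arm : Ω → I → Bool)          -- treatment arm of each unit under each assignment
    (Y : I → Bool → ℝ)            -- fixed potential outcomes
    (h : I → ℝ → ℝ)               -- effect model at the true causal parameter
    (hmodel : ∀ i, Y i true = h i (Y i false))
    (M : I → Bool)                -- fixed missingness indicators (Assumption 3)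
    (W : Ω → I → ℝ)               -- transformed outcomes
    (hW : ∀ (z : Ω) (i : I),
      W z i = if arm z i then Y i (arm z i) else h i (Y i (arm z i)))
    (Wstar : Ω → I → Option ℝ)    -- transformed realized outcomes
    (hWstar : ∀ (z : Ω) (i : I), Wstar z i = if M i then none else some (W z i))
    (res : Ω → (I → Option ℝ) → (I → ℝ))  -- residual vector
    (T : Ω → (I → ℝ) → ℝ)                 -- test statistic
    (z₀ : Ω)                              -- observed assignment
    (Z : ℕ → Ω' → Ω)                      -- Monte Carlo re-randomization draws
    (hZmeas : ∀ l, Measurable (Z l))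
    (hZlaw : ∀ l, μ.map (Z l) = P.toMeasure)             -- identically distributed with law P
    (hZindep : iIndepFun Z μ)   -- independent
    (tβ : ℝ)
    (pβ : ℝ)
    (hpβ : pβ = (P.toMeasure {z | T z (res z (Wstar z)) ≥ tβ}).toReal)  -- exact p-value
    (phat : ℕ → Ω' → ℝ)
    (hphat : ∀ L ω, phat L ω =
      (1 / (L : ℝ)) * ∑ l ∈ Finset.range L,
        (if T (Z l ω) (res (Z l ω) (Wstar z₀)) ≥ tβ then (1 : ℝ) else 0)) :
    ∀ᵐ ω ∂μ, Tendsto (fun L => phat L ω) atTop (nhds pβ) := by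
  have hWstar_const : ∀ z, Wstar z = Wstar z₀ := fun z => funext fun i => by
    simp only [hWstar, hW, adjusted_outcome_eq_treated (hmodel i)]
  set S : Set Ω := {z | T z (res z (Wstar z₀)) ≥ tβ}
  have hpβS : pβ = P.toMeasure.real S := by simp only [hpβ, hWstar_const]; rfl
  filter_upwards [strong_law_ae_indicator hZmeas hZlaw
    (fun i j hij => hZindep.indepFun hij) S.toFinite.measurableSet] with ω hω
  rw [hpβS]
  refine hω.congr fun L => ?_
  simp only [hphat, Set.indicator_apply, Pi.one_apply, S, Set.mem_ofPred_eq, one_div_mul_eq_div]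

/-- Lemma 3, almost-sure consistency at the true causal parameter. -/
theorem lemma3_as_consistency_true_parameter
    {Ω : Type*} [Fintype Ω] [Nonempty Ω] [MeasurableSpace Ω] [MeasurableSingletonClass Ω]
    {I : Type*} [Fintype I]
    {Ω' : Type*} [MeasurableSpace Ω'] (μ : Measure Ω') [IsProbabilityMeasure μ]
    (P : PMF Ω)                   -- randomization distribution (Assumption 1)
    (arm : Ω → I → Bool)          -- treatment arm of each unit under each assignment
    (Y : I → Bool → ℝ)            -- fixed potential outcomes
    (h : I → ℝ → ℝ)               -- effect model at the true causal parameter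
    (hmodel : ∀ i, Y i true = h i (Y i false))
    (M : I → Bool)                -- fixed missingness indicators (Assumption 3)
    (W : Ω → I → ℝ)               -- transformed outcomes
    (hW : ∀ (z : Ω) (i : I),
      W z i = if arm z i then Y i (arm z i) else h i (Y i (arm z i)))
    (Wstar : Ω → I → Option ℝ)    -- transformed realized outcomes
    (hWstar : ∀ (z : Ω) (i : I), Wstar z i = if M i then none else some (W z i))
    (G : Ω → (I → Option ℝ) → (I → ℝ))    -- deterministic imputation algorithm
    (H : (I → ℝ) → (I → ℝ))               -- deterministic covariate-adjustment model
    (res : Ω → (I → Option ℝ) → (I → ℝ))  -- residual vector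
    (hres : ∀ z ystar i, res z ystar i = G z ystar i - H (G z ystar) i)
    (T : Ω → (I → ℝ) → ℝ)                 -- test statistic
    (z₀ : Ω)                              -- observed assignment
    (Z : ℕ → Ω' → Ω)                      -- Monte Carlo re-randomization draws
    (hZmeas : ∀ l, Measurable (Z l))
    (hZlaw : ∀ l, μ.map (Z l) = P.toMeasure)             -- identically distributed with law P
    (hZindep : iIndepFun Z μ)   -- independent
    (tβ : ℝ) (htβ : tβ = T z₀ (res z₀ (Wstar z₀)))       -- observed statistic value
    (pβ : ℝ)
    (hpβ : pβ = (P.toMeasure {z | T z (res z (Wstar z)) ≥ tβ}).toReal)  -- exact p-value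
    (phat : ℕ → Ω' → ℝ)
    (hphat : ∀ L ω, phat L ω =
      (1 / (L : ℝ)) * ∑ l ∈ Finset.range L,
        (if T (Z l ω) (res (Z l ω) (Wstar z₀)) ≥ tβ then (1 : ℝ) else 0)) :
    ∀ᵐ ω ∂μ, Tendsto (fun L => phat L ω) atTop (nhds pβ) :=
  lemma3_as_consistency_true_parameter_general μ P arm Y h hmodel M W hW Wstar hWstar res T z₀ Z
    hZmeas hZlaw hZindep tβ pβ hpβ phat hphat
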